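/- arXiv:2408.07361 — 5 statements merged into one kernel-verified Lean document; each statement's English description precedes it below -/
import Mathlib

section
/- A solution φ satisfies higher direct liability and independent indirect liabilities if and only if there exists a weight vector π ∈ [0,1]ⁿ such that for all i < j, φ(i,j) = (1 − π_j)·φ(j,j), and for each i, φ(i,i) = ℓ_i + ∑_{k > i} (∏_{i < j ≤ k} π_j)·ℓ_k. -/
/-!
Balance at `i` and at its immediate successor `j`, together with independence of indirect
liabilities (`φ i k = φ j k` for `k > j`), give the two-term recursion
`φ i i + φ i j = ℓ i + φ j j`. Higher direct liability makes every `φ k k` positive, so the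
weight `π k = 1 - φ i k / φ k k` (independent of `i < k`) lies in `[0, 1]` and turns the
recursion into `φ i i = ℓ i + π j * φ j j`. The closed formula satisfies the same recursion
with the same value `ℓ i` at the top, so the two agree by downward induction.
-/

open Finset

variable {α : Type*} [LinearOrder α]

theorem CovBy.finsetIoi_eq [LocallyFiniteOrderTop α] {a b : α} (h : a ⋖ b) : Ioi a = Ici b := by
  ext x
  simp only [mem_Ioi, mem_Ici]
  exact ⟨h.ge_of_gt, h.lt.trans_le⟩

theorem CovBy.finsetIoc_eq_Icc [LocallyFiniteOrder α] {a b : α} (h : a ⋖ b) (c : α) :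
    Ioc a c = Icc b c := by
  ext x
  simp only [mem_Ioc, mem_Icc]
  exact and_congr_left' ⟨h.ge_of_gt, h.lt.trans_le⟩

section Cascade

variable {R : Type*} [CommSemiring R]

def cascadeLoss [LocallyFiniteOrder α] [LocallyFiniteOrderTop α] (π ℓ : α → R) (i : α) : R :=
  ℓ i + ∑ k ∈ Ioi i, (∏ j ∈ Ioc i k, π j) * ℓ k

variable [LocallyFiniteOrder α] [LocallyFiniteOrderTop α] (π ℓ : α → R)

theorem cascadeLoss_of_isMax {i : α} (hi : IsMax i) : cascadeLoss π ℓ i = ℓ i := by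
  simp [cascadeLoss, hi.finsetIoi_eq]

theorem cascadeLoss_of_covBy {i j : α} (hij : i ⋖ j) :
    cascadeLoss π ℓ i = ℓ i + π j * cascadeLoss π ℓ j := by
  have hprod : ∀ k ∈ Ici j, ∏ m ∈ Ioc i k, π m = π j * ∏ m ∈ Ioc j k, π m := fun k hk => by
    rw [hij.finsetIoc_eq_Icc, Icc_eq_cons_Ioc (mem_Ici.mp hk), prod_cons]
  rw [cascadeLoss, cascadeLoss, hij.finsetIoi_eq, sum_congr rfl fun k hk => by rw [hprod k hk],
    Ici_eq_cons_Ioi, sum_cons, Ioc_self, prod_empty, mul_add, mul_sum]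
  simp only [mul_assoc, mul_one]

theorem eq_cascadeLoss [WellFoundedLT α] [WellFoundedGT α] {D : α → R}
    (hmax : ∀ i, IsMax i → D i = ℓ i) (hcov : ∀ i j, i ⋖ j → D i = ℓ i + π j * D j) (i : α) :
    D i = cascadeLoss π ℓ i := by
  induction i using WellFoundedGT.induction with
  | _ i ih =>
    by_cases hi : IsMax i
    · rw [hmax i hi, cascadeLoss_of_isMax π ℓ hi]
    · obtain ⟨j, hij⟩ := exists_covBy_of_wellFoundedLT hi
      rw [hcov i j hij, cascadeLoss_of_covBy π ℓ hij, ih j hij.lt]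

end Cascade

section Liability

variable [LocallyFiniteOrderTop α] {ℓ : α → ℝ} {φ : α → α → ℝ}

theorem direct_liability_of_isMax (hbal : ∀ i, ∑ j ∈ Ici i, φ i j = ∑ j ∈ Ici i, ℓ j) {i : α}
    (hi : IsMax i) : φ i i = ℓ i := by
  simpa [Ici_eq_cons_Ioi, hi.finsetIoi_eq] using hbal i

theorem direct_liability_add_of_covBy (hbal : ∀ i, ∑ j ∈ Ici i, φ i j = ∑ j ∈ Ici i, ℓ j)
    (hind : ∀ i j k, i < j → j < k → φ i k = φ j k) {i j : α} (hij : i ⋖ j) :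
    φ i i + φ i j = ℓ i + φ j j := by
  have hi := hbal i
  have hj := hbal j
  have htail : ∑ k ∈ Ioi j, φ i k = ∑ k ∈ Ioi j, φ j k :=
    sum_congr rfl fun k hk => hind i j k hij.lt (mem_Ioi.mp hk)
  rw [Ici_eq_cons_Ioi, sum_cons, sum_cons, hij.finsetIoi_eq, Ici_eq_cons_Ioi, sum_cons, sum_cons,
    htail] at hi
  rw [Ici_eq_cons_Ioi, sum_cons, sum_cons] at hj
  linarith

theorem direct_liability_pos [WellFoundedLT α] (hℓ : ∀ i, 0 < ℓ i)
    (hbal : ∀ i, ∑ j ∈ Ici i, φ i j = ∑ j ∈ Ici i, ℓ j)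
    (hdl : ∀ j k, j < k → φ j k ≤ φ k k) (hind : ∀ i j k, i < j → j < k → φ i k = φ j k)
    (i : α) : 0 < φ i i := by
  by_cases hi : IsMax i
  · rw [direct_liability_of_isMax hbal hi]
    exact hℓ i
  · obtain ⟨j, hij⟩ := exists_covBy_of_wellFoundedLT hi
    linarith [direct_liability_add_of_covBy hbal hind hij, hdl i j hij.lt, hℓ i]

end Liability

theorem indirect_liability_eq {φ : α → α → ℝ} (hind : ∀ i j k, i < j → j < k → φ i k = φ j k)
    {i i' k : α} (hi : i < k) (hi' : i' < k) : φ i k = φ i' k := by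
  rcases lt_trichotomy i i' with h | rfl | h
  · exact hind i i' k h hi'
  · rfl
  · exact (hind i' i k h hi).symm

theorem exists_weights_of_indirect_liability {φ : α → α → ℝ} (hnonneg : ∀ i j, 0 ≤ φ i j)
    (hpos : ∀ k, 0 < φ k k) (hdl : ∀ j k, j < k → φ j k ≤ φ k k)
    (hind : ∀ i j k, i < j → j < k → φ i k = φ j k) :
    ∃ π : α → ℝ, (∀ j, π j ∈ Set.Icc (0 : ℝ) 1) ∧ ∀ i j, i < j → φ i j = (1 - π j) * φ j j := by
  classical
  refine ⟨fun k => if h : ∃ i, i < k then 1 - φ h.choose k / φ k k else 0, fun k => ?_,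
    fun i j hij => ?_⟩
  · dsimp only
    split_ifs with h
    · exact ⟨sub_nonneg.mpr ((div_le_one (hpos k)).mpr (hdl _ k h.choose_spec)),
        sub_le_self _ (div_nonneg (hnonneg _ k) (hpos k).le)⟩
    · exact Set.left_mem_Icc.mpr zero_le_one
  · have h : ∃ i, i < j := ⟨i, hij⟩
    dsimp only
    rw [dif_pos h, sub_sub_cancel, div_mul_cancel₀ _ (hpos j).ne',
      indirect_liability_eq hind hij h.choose_spec]

theorem stmt_1_general (n : ℕ) (ℓ : Fin n → ℝ) (φ : Fin n → Fin n → ℝ)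
    (hℓ : ∀ i, 0 < ℓ i)
    (hnonneg : ∀ i j, 0 ≤ φ i j)
    (hbalance : ∀ i : Fin n,
      ∑ j ∈ univ.filter (fun j => i ≤ j), φ i j = ∑ j ∈ univ.filter (fun j => i ≤ j), ℓ j) :
    ((∀ j k : Fin n, j < k → φ j k ≤ φ k k) ∧
      (∀ i j k : Fin n, i < j → j < k → φ i k = φ j k)) ↔
    (∃ π : Fin n → ℝ, (∀ j, π j ∈ Set.Icc (0:ℝ) 1) ∧
      (∀ i j : Fin n, i < j → φ i j = (1 - π j) * φ j j) ∧
      (∀ i : Fin n, φ i i = ℓ i +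
        ∑ k ∈ univ.filter (fun k => i < k),
          (∏ j ∈ univ.filter (fun j => i < j ∧ j ≤ k), π j) * ℓ k)) := by
  simp only [filter_le_eq_Ici, filter_lt_eq_Ioi, filter_lt_le_eq_Ioc] at hbalance ⊢
  constructor
  · rintro ⟨hdl, hind⟩
    obtain ⟨π, hπ, hoff⟩ := exists_weights_of_indirect_liability hnonneg
      (direct_liability_pos hℓ hbalance hdl hind) hdl hind
    refine ⟨π, hπ, hoff, eq_cascadeLoss π ℓ (fun i hi => direct_liability_of_isMax hbalance hi)
      fun i j hij => ?_⟩
    have hrec := direct_liability_add_of_covBy hbalance hind hij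
    rw [hoff i j hij.lt] at hrec
    linarith
  · rintro ⟨π, hπ, hoff, -⟩
    refine ⟨fun j k hjk => ?_, fun i j k hij hjk => by rw [hoff i k (hij.trans hjk), hoff j k hjk]⟩
    rw [hoff j k hjk]
    exact mul_le_of_le_one_left (hnonneg k k) (sub_le_self _ (hπ k).1)

/-- A solution φ satisfies higher direct liability and independent
indirect liabilities iff there are weights π ∈ [0,1]ⁿ with φ(i,j) = (1-π_j)·φ(j,j)
for i < j and φ(i,i) = ℓ_i + ∑_{k>i} (∏_{i<j≤k} π_j)·ℓ_k. -/
theorem stmt_1 (n : ℕ) (ℓ : Fin n → ℝ) (φ : Fin n → Fin n → ℝ)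
    (hℓ : ∀ i, 0 < ℓ i)
    (hnonneg : ∀ i j, 0 ≤ φ i j)
    (hzero : ∀ i j : Fin n, j < i → φ i j = 0)
    (hbalance : ∀ i : Fin n,
      ∑ j ∈ univ.filter (fun j => i ≤ j), φ i j = ∑ j ∈ univ.filter (fun j => i ≤ j), ℓ j) :
    ((∀ j k : Fin n, j < k → φ j k ≤ φ k k) ∧
      (∀ i j k : Fin n, i < j → j < k → φ i k = φ j k)) ↔
    (∃ π : Fin n → ℝ, (∀ j, π j ∈ Set.Icc (0:ℝ) 1) ∧
      (∀ i j : Fin n, i < j → φ i j = (1 - π j) * φ j j) ∧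
      (∀ i : Fin n, φ i i = ℓ i +
        ∑ k ∈ univ.filter (fun k => i < k),
          (∏ j ∈ univ.filter (fun j => i < j ∧ j ≤ k), π j) * ℓ k)) :=
  stmt_1_general n ℓ φ hℓ hnonneg hbalance
end

section
/- For each agent k and each agent i < k, the mixed second partial derivative of agent k's expected cost C_k with respect to x_i and x_k is nonpositive; that is, the induced investment game is supermodular (costs are submodular in own and earlier investments). -/
/-!
Only the last two terms of `C_k` involve `x_k`, so
`∂C_k/∂x_k = 1 - (∏_{h<k} p_h(x_h)) p_k'(x_k) φ(k,k)`. For `i < k` this depends on `x_i` only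
through the factor `p_i(x_i)` of the product, hence
`∂²C_k/∂x_i∂x_k = -p_i'(x_i) p_k'(x_k) φ(k,k) ∏_{h<k, h≠i} p_h(x_h) ≤ 0`,
because monotone functions have nonnegative derivatives and all other factors are nonnegative.
-/

open Finset

/-- Agent k's expected cost at profile x under solution φ. -/
noncomputable def expCost (n : ℕ) (p : Fin n → ℝ → ℝ) (φ : Fin n → Fin n → ℝ)
    (k : Fin n) (x : Fin n → ℝ) : ℝ :=
  (∑ j ∈ univ.filter (fun j => j < k),
    (∏ h ∈ univ.filter (fun h => h < j), p h (x h)) * (1 - p j (x j)) * φ j k)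
  + (∏ h ∈ univ.filter (fun h => h < k), p h (x h)) * (1 - p k (x k)) * φ k k
  + x k

section
variable {n : ℕ} (p : Fin n → ℝ → ℝ) (φ : Fin n → Fin n → ℝ) (k : Fin n) (y : Fin n → ℝ)

theorem expCost_update_self (t : ℝ) :
    expCost n p φ k (Function.update y k t) =
      (∑ j ∈ univ.filter (· < k),
        (∏ h ∈ univ.filter (· < j), p h (y h)) * (1 - p j (y j)) * φ j k)
      + (∏ h ∈ univ.filter (· < k), p h (y h)) * (1 - p k t) * φ k k + t := by
  have hy : ∀ h < k, Function.update y k t h = y h := fun h hh =>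
    Function.update_of_ne hh.ne _ _
  unfold expCost
  congr 2
  · refine sum_congr rfl fun j hj => ?_
    have hjk : j < k := (mem_filter.mp hj).2
    rw [hy j hjk]
    congr 2
    exact prod_congr rfl fun h hh => by rw [hy h ((mem_filter.mp hh).2.trans hjk)]
  · rw [Function.update_self]
    congr 2
    exact prod_congr rfl fun h hh => by rw [hy h (mem_filter.mp hh).2]
  · exact Function.update_self _ _ _

theorem hasDerivAt_expCost_update_self {a : ℝ} (hd : DifferentiableAt ℝ (p k) a) :
    HasDerivAt (fun t => expCost n p φ k (Function.update y k t))
      (1 - (∏ h ∈ univ.filter (· < k), p h (y h)) * deriv (p k) a * φ k k) a := by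
  simp_rw [expCost_update_self]
  exact ((((hd.hasDerivAt.const_sub 1).const_mul _).mul_const _).const_add _
    |>.add (hasDerivAt_id' a)).congr_deriv (by ring)

end

theorem stmt_5_general (n : ℕ) (p : Fin n → ℝ → ℝ) (φ : Fin n → Fin n → ℝ)
    (hp_mono : ∀ i, StrictMonoOn (p i) (Set.Ici 0))
    (hp_smooth : ∀ i, ContDiff ℝ 2 (p i))
    (hp_range : ∀ i x, 0 ≤ x → p i x ∈ Set.Icc (0:ℝ) 1)
    (hφ : ∀ i j, 0 ≤ φ i j)
    (x : Fin n → ℝ) (hx : ∀ i, 0 < x i)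
    (i k : Fin n) (hik : i < k) :
    deriv (fun s =>
        deriv (fun t => expCost n p φ k (Function.update (Function.update x i s) k t))
          (x k))
      (x i) ≤ 0 := by
  have hd : ∀ j, Differentiable ℝ (p j) := fun j => (hp_smooth j).differentiable two_ne_zero
  have hp' : ∀ j, 0 ≤ deriv (p j) (x j) := fun j => by
    rw [← derivWithin_of_mem_nhds (Ici_mem_nhds (hx j))]
    exact (hp_mono j).monotoneOn.derivWithin_nonneg
  set P := ∏ h ∈ univ.filter (· < k) \ {i}, p h (x h)
  have hP : 0 ≤ P := prod_nonneg fun h _ => (hp_range h (x h) (hx h).le).1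
  have hprod : ∀ s, ∏ h ∈ univ.filter (· < k), p h (Function.update x i s h) = p i s * P :=
    fun s => by
      simp_rw [Function.apply_update (fun h => p h)]
      exact prod_update_of_mem (by simpa using hik) _ _
  have hinner : (fun s => deriv (fun t =>
        expCost n p φ k (Function.update (Function.update x i s) k t)) (x k))
      = fun s => 1 - p i s * P * deriv (p k) (x k) * φ k k := by
    funext s
    rw [(hasDerivAt_expCost_update_self p φ k _ (hd k (x k))).deriv, hprod]
  rw [hinner, ((((hd i (x i)).hasDerivAt.mul_const P).mul_const (deriv (p k) (x k))).mul_const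
    (φ k k)).const_sub 1 |>.deriv, neg_nonpos]
  exact mul_nonneg (mul_nonneg (mul_nonneg (hp' i) hP) (hp' k)) (hφ k k)

/-- For agents i < k, the mixed second partial derivative of agent k's
expected cost with respect to x_i and x_k is nonpositive (the induced game is
supermodular). -/
theorem stmt_5 (n : ℕ) (p : Fin n → ℝ → ℝ) (φ : Fin n → Fin n → ℝ)
    (hp_mono : ∀ i, StrictMonoOn (p i) (Set.Ici 0))
    (hp_concave : ∀ i, StrictConcaveOn ℝ (Set.Ici 0) (p i))
    (hp_smooth : ∀ i, ContDiff ℝ 2 (p i))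
    (hp_zero : ∀ i, p i 0 = 0)
    (hp_range : ∀ i x, 0 ≤ x → p i x ∈ Set.Icc (0:ℝ) 1)
    (hφ : ∀ i j, 0 ≤ φ i j)
    (x : Fin n → ℝ) (hx : ∀ i, 0 < x i)
    (i k : Fin n) (hik : i < k) :
    deriv (fun s =>
        deriv (fun t => expCost n p φ k (Function.update (Function.update x i s) k t))
          (x k))
      (x i) ≤ 0 :=
  stmt_5_general n p φ hp_mono hp_smooth hp_range hφ x hx i k hik
end

section
/- Any first-best solution (one implementing efficient investments) must assign strictly positive indirect liability: there exist agents i < j with φ(i,j) > 0, provided n ≥ 2. -/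
/-!
If agent `i` bore no indirect liability, balance would force its direct liability to cover all
losses `ℓ i + ∑_{k > i} ℓ k`. But the first-best direct liability weighs each later loss `ℓ k`
by a product of probabilities `a j < 1`, so it falls strictly short as soon as some agent
follows `i`. Taking `i` to be the first agent, `n ≥ 2` supplies the follower.
-/

open Finset

variable {ι : Type*} [LinearOrder ι] [Fintype ι]

theorem sum_filter_le_eq_add_sum_filter_lt {M : Type*} [AddCommMonoid M] (f : ι → M) (i : ι) :
    ∑ j ∈ univ.filter (fun j => i ≤ j), f j = f i + ∑ j ∈ univ.filter (fun j => i < j), f j := by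
  have hsplit : univ.filter (fun j => i ≤ j) = insert i (univ.filter (fun j => i < j)) := by
    ext j
    simp [le_iff_eq_or_lt, eq_comm]
  rw [hsplit, sum_insert (by simp)]

theorem sum_prod_mul_lt_sum_filter_lt {a ℓ : ι → ℝ} {i k : ι} (hik : i < k)
    (ha₀ : ∀ j, 0 ≤ a j) (ha₁ : ∀ j, a j < 1) (hℓ : ∀ j, 0 < ℓ j) :
    ∑ k ∈ univ.filter (fun k => i < k), (∏ j ∈ univ.filter (fun j => i < j ∧ j ≤ k), a j) * ℓ k
      < ∑ k ∈ univ.filter (fun k => i < k), ℓ k := by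
  refine sum_lt_sum_of_nonempty ⟨k, by simpa using hik⟩ fun m hm => ?_
  have hm_mem : m ∈ univ.filter (fun j => i < j ∧ j ≤ m) := by simpa using hm
  have hprod : ∏ j ∈ univ.filter (fun j => i < j ∧ j ≤ m), a j < 1 := by
    rw [← mul_prod_erase _ _ hm_mem]
    calc a m * ∏ j ∈ (univ.filter (fun j => i < j ∧ j ≤ m)).erase m, a j
        ≤ a m := mul_le_of_le_one_right (ha₀ m) (prod_le_one (fun j _ => ha₀ j) fun j _ => (ha₁ j).le)
      _ < 1 := ha₁ m
  exact mul_lt_of_lt_one_left (hℓ m) hprod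

theorem exists_pos_indirect_of_balanced {ℓ a : ι → ℝ} {φ : ι → ι → ℝ} {i k : ι} (hik : i < k)
    (hℓ : ∀ j, 0 < ℓ j) (ha₀ : ∀ j, 0 ≤ a j) (ha₁ : ∀ j, a j < 1) (hnonneg : ∀ j, 0 ≤ φ i j)
    (hbalance : ∑ j ∈ univ.filter (fun j => i ≤ j), φ i j = ∑ j ∈ univ.filter (fun j => i ≤ j), ℓ j)
    (hdirect : φ i i = ℓ i +
      ∑ k ∈ univ.filter (fun k => i < k), (∏ j ∈ univ.filter (fun j => i < j ∧ j ≤ k), a j) * ℓ k) :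
    ∃ j, i < j ∧ 0 < φ i j := by
  by_contra! h
  have hindirect : ∑ j ∈ univ.filter (fun j => i < j), φ i j = 0 :=
    sum_eq_zero fun j hj => le_antisymm (h j (mem_filter.1 hj).2) (hnonneg j)
  rw [sum_filter_le_eq_add_sum_filter_lt, sum_filter_le_eq_add_sum_filter_lt, hindirect,
    hdirect] at hbalance
  linarith [sum_prod_mul_lt_sum_filter_lt hik ha₀ ha₁ hℓ]

theorem stmt_13_general (n : ℕ) (hn : 2 ≤ n) (ℓ : Fin n → ℝ) (a : Fin n → ℝ)
    (φ : Fin n → Fin n → ℝ)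
    (hℓ : ∀ j, 0 < ℓ j)
    (ha : ∀ j, a j ∈ Set.Ioo (0:ℝ) 1)
    (hnonneg : ∀ i j, 0 ≤ φ i j)
    (hbalance : ∀ i : Fin n,
      ∑ j ∈ univ.filter (fun j => i ≤ j), φ i j = ∑ j ∈ univ.filter (fun j => i ≤ j), ℓ j)
    (hdirect : ∀ i : Fin n, φ i i = ℓ i +
      ∑ k ∈ univ.filter (fun k => i < k),
        (∏ j ∈ univ.filter (fun j => i < j ∧ j ≤ k), a j) * ℓ k) :
    ∃ i j : Fin n, i < j ∧ 0 < φ i j := by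
  have hfirst : (⟨0, by omega⟩ : Fin n) < ⟨1, by omega⟩ := Fin.mk_lt_mk.2 one_pos
  obtain ⟨j, hj, hφ⟩ := exists_pos_indirect_of_balanced hfirst hℓ (fun j => (ha j).1.le)
    (fun j => (ha j).2) (hnonneg _) (hbalance _) (hdirect _)
  exact ⟨_, j, hj, hφ⟩

/-- Any first-best solution (balanced, nonnegative, zero liability for
earlier agents, and with the Theorem-1 direct liabilities, where a_j = p_j(x*_j) ∈ (0,1))
must assign strictly positive indirect liability to some pair i < j, provided n ≥ 2. -/
theorem stmt_13 (n : ℕ) (hn : 2 ≤ n) (ℓ : Fin n → ℝ) (a : Fin n → ℝ)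
    (φ : Fin n → Fin n → ℝ)
    (hℓ : ∀ j, 0 < ℓ j)
    (ha : ∀ j, a j ∈ Set.Ioo (0:ℝ) 1)
    (hnonneg : ∀ i j, 0 ≤ φ i j)
    (hzero : ∀ i j : Fin n, j < i → φ i j = 0)
    (hbalance : ∀ i : Fin n,
      ∑ j ∈ univ.filter (fun j => i ≤ j), φ i j = ∑ j ∈ univ.filter (fun j => i ≤ j), ℓ j)
    (hdirect : ∀ i : Fin n, φ i i = ℓ i +
      ∑ k ∈ univ.filter (fun k => i < k),
        (∏ j ∈ univ.filter (fun j => i < j ∧ j ≤ k), a j) * ℓ k) :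
    ∃ i j : Fin n, i < j ∧ 0 < φ i j :=
  stmt_13_general n hn ℓ a φ hℓ ha hnonneg hbalance hdirect
end

section
/- The solution φ* defined by φ*(i,i) = ℓ_i + ∑_{k > i} (∏_{i < j ≤ k} p_j(x*_j))·ℓ_k and φ*(i,j) = (1 − p_j(x*_j))·φ*(j,j) for i < j is balanced: for each i, ∑_{j ≥ i} φ*(i,j) = ∑_{j ≥ i} ℓ_j. -/
/-! The diagonal entries `D i = φ*(i,i)` satisfy the backward recursion
`D i = ℓ i + a (i+1) * D (i+1)`. Splitting off `j = i + 1` from the row sum of `i`, the terms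
`a (i+1) * D (i+1) + (1 - a (i+1)) * D (i+1)` recombine into `D (i+1)`, so the row sum of `i`
is `ℓ i` plus the row sum of `i + 1`, and balance follows by backward induction from the last
agent. -/

open Finset

variable {R : Type*}

lemma Fin.Ioi_castSucc_eq_Ici_succ {m : ℕ} (i : Fin m) : Ioi i.castSucc = Ici i.succ := by
  ext k; simp [Fin.castSucc_lt_iff_succ_le]

lemma Fin.Ioc_castSucc_eq_Icc_succ {m : ℕ} (i : Fin m) (k : Fin (m + 1)) :
    Ioc i.castSucc k = Icc i.succ k := by
  ext j; simp [Fin.castSucc_lt_iff_succ_le]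

lemma Fin.Ioi_last (m : ℕ) : Ioi (Fin.last m) = ∅ :=
  Ioi_eq_empty.mpr isMax_top

section

variable [CommSemiring R] {n : ℕ}

def directLiability (ℓ a : Fin n → R) (i : Fin n) : R :=
  ℓ i + ∑ k ∈ Ioi i, (∏ j ∈ Ioc i k, a j) * ℓ k

lemma directLiability_eq_sum_Ici (ℓ a : Fin n → R) (i : Fin n) :
    directLiability ℓ a i = ∑ k ∈ Ici i, (∏ j ∈ Ioc i k, a j) * ℓ k := by
  rw [directLiability, ← add_sum_Ioi_eq_sum_Ici, Ioc_self, prod_empty, one_mul]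

lemma directLiability_last {m : ℕ} (ℓ a : Fin (m + 1) → R) :
    directLiability ℓ a (Fin.last m) = ℓ (Fin.last m) := by
  rw [directLiability, Fin.Ioi_last, sum_empty, add_zero]

lemma directLiability_castSucc {m : ℕ} (ℓ a : Fin (m + 1) → R) (i : Fin m) :
    directLiability ℓ a i.castSucc =
      ℓ i.castSucc + a i.succ * directLiability ℓ a i.succ := by
  have hprod : ∀ k ∈ Ici i.succ,
      ∏ j ∈ Ioc i.castSucc k, a j = a i.succ * ∏ j ∈ Ioc i.succ k, a j := by
    intro k hk
    rw [Fin.Ioc_castSucc_eq_Icc_succ, ← Ioc_insert_left (mem_Ici.mp hk),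
      prod_insert left_notMem_Ioc]
  rw [directLiability, Fin.Ioi_castSucc_eq_Ici_succ, directLiability_eq_sum_Ici, mul_sum]
  congr 1
  exact sum_congr rfl fun k hk => by rw [hprod k hk, mul_assoc]

end

theorem add_sum_Ioi_one_sub_mul_eq_sum_Ici [CommRing R] {m : ℕ} (ℓ a D : Fin (m + 1) → R)
    (hlast : D (Fin.last m) = ℓ (Fin.last m))
    (hrec : ∀ i : Fin m, D i.castSucc = ℓ i.castSucc + a i.succ * D i.succ) (i : Fin (m + 1)) :
    D i + ∑ j ∈ Ioi i, (1 - a j) * D j = ∑ j ∈ Ici i, ℓ j := by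
  induction i using Fin.reverseInduction with
  | last => rw [← add_sum_Ioi_eq_sum_Ici, Fin.Ioi_last, sum_empty, sum_empty, hlast]
  | cast i ih =>
    rw [← add_sum_Ioi_eq_sum_Ici, Fin.Ioi_castSucc_eq_Ici_succ, ← ih,
      ← add_sum_Ioi_eq_sum_Ici, hrec]
    ring

theorem stmt_14_general (n : ℕ) (ℓ : Fin n → ℝ) (a : Fin n → ℝ)
    (φstar : Fin n → Fin n → ℝ)
    (hdiag : ∀ i : Fin n, φstar i i = ℓ i +
      ∑ k ∈ univ.filter (fun k => i < k),
        (∏ j ∈ univ.filter (fun j => i < j ∧ j ≤ k), a j) * ℓ k)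
    (hoff : ∀ i j : Fin n, i < j → φstar i j = (1 - a j) * φstar j j) :
    ∀ i : Fin n,
      ∑ j ∈ univ.filter (fun j => i ≤ j), φstar i j
        = ∑ j ∈ univ.filter (fun j => i ≤ j), ℓ j := by
  intro i
  rcases n with _ | m
  · exact i.elim0
  have hD : ∀ i, φstar i i = directLiability ℓ a i := fun i => by
    simp only [hdiag, directLiability, filter_lt_eq_Ioi, filter_lt_le_eq_Ioc]
  rw [filter_le_eq_Ici, ← add_sum_Ioi_eq_sum_Ici,
    sum_congr rfl fun j hj => hoff i j (mem_Ioi.mp hj)]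
  refine add_sum_Ioi_one_sub_mul_eq_sum_Ici ℓ a (fun j => φstar j j) ?_ ?_ i
  · simp only [hD, directLiability_last]
  · simp only [hD, directLiability_castSucc, implies_true]

/-- The solution φ* with direct liabilities
φ*(i,i) = ℓ_i + ∑_{k>i} (∏_{i<j≤k} a_j)·ℓ_k (a_j = p_j(x*_j) ∈ (0,1)) and
indirect liabilities φ*(i,j) = (1 − a_j)·φ*(j,j) for i < j (and 0 for j < i)
is balanced: ∑_{j≥i} φ*(i,j) = ∑_{j≥i} ℓ_j for each i. -/
theorem stmt_14 (n : ℕ) (ℓ : Fin n → ℝ) (a : Fin n → ℝ)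
    (φstar : Fin n → Fin n → ℝ)
    (hℓ : ∀ j, 0 < ℓ j)
    (ha : ∀ j, a j ∈ Set.Ioo (0:ℝ) 1)
    (hdiag : ∀ i : Fin n, φstar i i = ℓ i +
      ∑ k ∈ univ.filter (fun k => i < k),
        (∏ j ∈ univ.filter (fun j => i < j ∧ j ≤ k), a j) * ℓ k)
    (hoff : ∀ i j : Fin n, i < j → φstar i j = (1 - a j) * φstar j j)
    (hzero : ∀ i j : Fin n, j < i → φstar i j = 0) :
    ∀ i : Fin n,
      ∑ j ∈ univ.filter (fun j => i ≤ j), φstar i j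
        = ∑ j ∈ univ.filter (fun j => i ≤ j), ℓ j :=
  stmt_14_general n ℓ a φstar hdiag hoff
end

section
/- Under φ*, for all agents i < k, the partial derivative of agent k's expected cost with respect to agent i's investment vanishes at the efficient profile: ∂C_k(x*; φ*)/∂x_i = 0. -/
open Finset

/-! Under `φ*` the indirect liabilities `φ*(j,k)`, `j < k`, all equal `(1 - p_k(x*_k)) φ*(k,k)`, so
the indirect term of `C_k` is that constant times the probability `1 - ∏_{j<k} p_j(x_j)` that some
predecessor fails. Adding the direct term, the factor `∏_{j<k} p_j(x_j)` cancels and `C_k` no longer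
depends on the investments of agents `i < k`. -/

theorem Finset.sum_prod_filter_lt_mul_one_sub {ι R : Type*} [Fintype ι] [LinearOrder ι]
    [CommRing R] (f : ι → R) (k : ι) :
    ∑ j ∈ univ.filter (fun j => j < k), (∏ h ∈ univ.filter (fun h => h < j), f h) * (1 - f j)
      = 1 - ∏ h ∈ univ.filter (fun h => h < k), f h := by
  have h := prod_one_sub_ordered (univ.filter (fun j => j < k)) (fun j => 1 - f j)
  simp only [sub_sub_cancel, filter_filter] at h
  rw [h, sub_sub_cancel]
  refine sum_congr rfl fun j hj => ?_
  have hjk : j < k := (mem_filter.mp hj).2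
  rw [mul_comm]
  congr 2
  ext h
  simp only [mem_filter, mem_univ, true_and]
  exact ⟨fun hhj => ⟨hhj.trans hjk, hhj⟩, And.right⟩

theorem expCost_eq_of_offDiag {n : ℕ} {p : Fin n → ℝ → ℝ} {φ : Fin n → Fin n → ℝ} {k : Fin n}
    {x : Fin n → ℝ} (hφ : ∀ j, j < k → φ j k = (1 - p k (x k)) * φ k k) :
    expCost n p φ k x = (1 - p k (x k)) * φ k k + x k := by
  have hindirect : ∑ j ∈ univ.filter (fun j => j < k),
      (∏ h ∈ univ.filter (fun h => h < j), p h (x h)) * (1 - p j (x j)) * φ j k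
        = (1 - ∏ h ∈ univ.filter (fun h => h < k), p h (x h)) * ((1 - p k (x k)) * φ k k) := by
    rw [← sum_prod_filter_lt_mul_one_sub (fun h => p h (x h)) k, sum_mul]
    exact sum_congr rfl fun j hj => by rw [hφ j (mem_filter.mp hj).2]
  rw [expCost, hindirect]
  ring

theorem stmt_16_general (n : ℕ) (p : Fin n → ℝ → ℝ)
    (φstar : Fin n → Fin n → ℝ)
    (xstar : Fin n → ℝ)
    (hstar_off : ∀ i k : Fin n, i < k →
      φstar i k = (1 - p k (xstar k)) * φstar k k) :
    ∀ i k : Fin n, i < k →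
      deriv (fun t => expCost n p φstar k (Function.update xstar i t)) (xstar i) = 0 := by
  intro i k hik
  have hconst : (fun t => expCost n p φstar k (Function.update xstar i t))
      = fun _ => (1 - p k (xstar k)) * φstar k k + xstar k := by
    funext t
    have hk : Function.update xstar i t k = xstar k := Function.update_of_ne hik.ne' _ _
    rw [expCost_eq_of_offDiag (by rw [hk]; exact fun j hj => hstar_off j k hj), hk]
  rw [hconst, deriv_const]

/-- Under φ* (with φ*(i,k) = (1 − p_k(x*_k))·φ*(k,k) for i < k and the
Theorem-1 direct liabilities), for all i < k the partial derivative of agent k's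
expected cost with respect to x_i vanishes at the efficient profile x*. -/
theorem stmt_16 (n : ℕ) (ℓ : Fin n → ℝ) (p : Fin n → ℝ → ℝ)
    (φstar : Fin n → Fin n → ℝ)
    (hℓ : ∀ j, 0 < ℓ j)
    (hp_diff : ∀ i, Differentiable ℝ (p i))
    (hp_pos : ∀ i x, 0 < x → 0 < p i x)
    (xstar : Fin n → ℝ) (hx_pos : ∀ i, 0 < xstar i)
    (hstar_diag : ∀ i : Fin n, φstar i i = ℓ i +
      ∑ k ∈ univ.filter (fun k => i < k),
        (∏ j ∈ univ.filter (fun j => i < j ∧ j ≤ k), p j (xstar j)) * ℓ k)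
    (hstar_off : ∀ i k : Fin n, i < k →
      φstar i k = (1 - p k (xstar k)) * φstar k k) :
    ∀ i k : Fin n, i < k →
      deriv (fun t => expCost n p φstar k (Function.update xstar i t)) (xstar i) = 0 :=
  stmt_16_general n p φstar xstar hstar_off
end
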